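/- Entropy-gap upper bound for the max-information: for any subnormalized bipartite state ρ_AB, I_max(A:B)_ρ ≤ H_R(A)_ρ − H_min(A|B)_ρ, where H_R(A)_ρ = −log λ_min(ρ_A) with λ_min the smallest nonzero eigenvalue of ρ_A. -/

import Mathlib

open scoped Kronecker BigOperators ComplexOrder
open Matrix MeasureTheory

noncomputable section
open scoped Classical

namespace QIT

variable {n m : Type*} [Fintype n] [DecidableEq n] [Fintype m] [DecidableEq m]

/-- Total square root of a positive semidefinite matrix (junk value `0` otherwise). -/
def psdSqrt (M : Matrix n n ℂ) : Matrix n n ℂ :=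
  if h : M.PosSemidef then
    (h.1.eigenvectorUnitary : Matrix n n ℂ) *
      Matrix.diagonal ((↑) ∘ (√·) ∘ h.1.eigenvalues) *
      (star h.1.eigenvectorUnitary : Matrix n n ℂ)
  else 0

/-- Trace norm `‖M‖₁ = tr √(MᴴM)`. -/
def trNorm (M : Matrix n n ℂ) : ℝ :=
  ((psdSqrt (Mᴴ * M)).trace).re

/-- Fidelity `F(ρ,σ) = ‖√ρ √σ‖₁`. -/
def fidelity (ρ σ : Matrix n n ℂ) : ℝ := trNorm (psdSqrt ρ * psdSqrt σ)

/-- Generalized fidelity for subnormalized states. -/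
def genFid (ρ σ : Matrix n n ℂ) : ℝ :=
  fidelity ρ σ + Real.sqrt ((1 - ρ.trace.re) * (1 - σ.trace.re))

/-- Purified distance. -/
def purifiedDist (ρ σ : Matrix n n ℂ) : ℝ := Real.sqrt (1 - (genFid ρ σ) ^ 2)

/-- Subnormalized state. -/
def Subnormalized (ρ : Matrix n n ℂ) : Prop := ρ.PosSemidef ∧ ρ.trace.re ≤ 1

/-- Normalized state (density operator). -/
def IsDensity (ρ : Matrix n n ℂ) : Prop := ρ.PosSemidef ∧ ρ.trace = 1

/-- Max-relative entropy `D_max(ρ‖σ) = inf {λ | 2^λ σ ≥ ρ}`. -/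
def Dmax (ρ σ : Matrix n n ℂ) : ℝ :=
  sInf {l : ℝ | ((2 : ℝ) ^ l • σ - ρ).PosSemidef}

/-- Functional calculus for Hermitian matrices (junk value `0` otherwise). -/
def fcal (f : ℝ → ℝ) (M : Matrix n n ℂ) : Matrix n n ℂ :=
  if h : M.IsHermitian then
    (h.eigenvectorUnitary : Matrix n n ℂ) *
      Matrix.diagonal (fun i => (f (h.eigenvalues i) : ℂ)) *
      (star (h.eigenvectorUnitary : Matrix n n ℂ))
  else 0

/-- Projector onto the support of a Hermitian matrix. -/
def suppProj (M : Matrix n n ℂ) : Matrix n n ℂ :=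
  fcal (fun x => if x = 0 then 0 else 1) M

/-- Moore–Penrose style pseudo negative power `M^{-r}` of a Hermitian matrix. -/
def pinvPow (r : ℝ) (M : Matrix n n ℂ) : Matrix n n ℂ :=
  fcal (fun x => if x = 0 then 0 else x ^ (-r)) M

/-- `supp ρ ⊆ supp σ`, expressed via kernels. -/
def suppLE (ρ σ : Matrix n n ℂ) : Prop :=
  ∀ v : n → ℂ, σ.mulVec v = 0 → ρ.mulVec v = 0

/-- Operator norm of a matrix. -/
def opNorm (M : Matrix n n ℂ) : ℝ := ‖Matrix.toEuclideanCLM (𝕜 := ℂ) M‖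

/-- Matrix logarithm in base 2 (on the support). -/
def matLog2 (M : Matrix n n ℂ) : Matrix n n ℂ := fcal (Real.logb 2) M

/-- Quantum relative entropy (base 2). -/
def relEnt (ρ σ : Matrix n n ℂ) : ℝ :=
  ((ρ * matLog2 ρ).trace).re - ((ρ * matLog2 σ).trace).re

variable {a b : Type*} [Fintype a] [DecidableEq a] [Fintype b] [DecidableEq b]

/-- Partial trace over the second tensor factor. -/
def ptrB (M : Matrix (a × b) (a × b) ℂ) : Matrix a a ℂ :=
  Matrix.of fun i j => ∑ k : b, M (i, k) (j, k)

/-- Partial trace over the first tensor factor. -/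
def ptrA (M : Matrix (a × b) (a × b) ℂ) : Matrix b b ℂ :=
  Matrix.of fun i j => ∑ k : a, M (k, i) (k, j)

/-- Max-information `I_max(A:B)_ρ = min_{σ_B density} D_max(ρ_AB‖ρ_A⊗σ_B)`. -/
def Imax (ρ : Matrix (a × b) (a × b) ℂ) : ℝ :=
  sInf {x : ℝ | ∃ σ : Matrix b b ℂ, IsDensity σ ∧ x = Dmax ρ (ptrB ρ ⊗ₖ σ)}

/-- Conditional min-entropy `H_min(A|B)_ρ`. -/
def HminCond (ρ : Matrix (a × b) (a × b) ℂ) : ℝ :=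
  - sInf {x : ℝ | ∃ σ : Matrix b b ℂ, IsDensity σ ∧ x = Dmax ρ ((1 : Matrix a a ℂ) ⊗ₖ σ)}

/-- Smooth max-information. -/
def smoothImax (ε : ℝ) (ρ : Matrix (a × b) (a × b) ℂ) : ℝ :=
  sInf {x : ℝ | ∃ ρ' : Matrix (a × b) (a × b) ℂ,
    Subnormalized ρ' ∧ purifiedDist ρ ρ' ≤ ε ∧ x = Imax ρ'}

/-- Tensor extension `Φ ⊗ id_d` of a map on matrices. -/
def tensorExt (Φ : Matrix a a ℂ → Matrix b b ℂ) (d : ℕ)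
    (M : Matrix (a × Fin d) (a × Fin d) ℂ) : Matrix (b × Fin d) (b × Fin d) ℂ :=
  Matrix.of fun p q => Φ (Matrix.of fun i j => M (i, p.2) (j, q.2)) p.1 q.1

/-- Completely positive trace preserving maps. -/
def IsCPTP (Φ : Matrix a a ℂ →ₗ[ℂ] Matrix b b ℂ) : Prop :=
  (∀ d : ℕ, ∀ M : Matrix (a × Fin d) (a × Fin d) ℂ,
      M.PosSemidef → (tensorExt Φ d M).PosSemidef) ∧
  (∀ M : Matrix a a ℂ, (Φ M).trace = M.trace)

end QIT

open QIT

/-! Write `ρ_A = ptrB ρ` and `P` for its support projector. Since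
`tr (ρ ((1 - P) ⊗ 1)) = tr (ρ_A (1 - P)) = 0`, positivity forces `ρ ((1 - P) ⊗ 1) = 0`, i.e.
`ρ = (P ⊗ 1) ρ (P ⊗ 1)`. Conjugating `ρ ≤ 2^t (1 ⊗ σ)` by `P ⊗ 1` gives `ρ ≤ 2^t (P ⊗ σ)`, and
`2^l P ≤ ρ_A` turns this into `ρ ≤ 2^(t - l) (ρ_A ⊗ σ)`. Hence
`I_max(A:B) ≤ D_max(ρ ‖ 1 ⊗ σ) - l` for every density `σ` and every admissible `l`;
optimising over both gives the bound. -/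

namespace QIT

open scoped MatrixOrder

section Order

variable {n : Type*}

theorem isHermitian_kronecker {m : Type*} {A : Matrix n n ℂ} {B : Matrix m m ℂ}
    (hA : A.IsHermitian) (hB : B.IsHermitian) : (A ⊗ₖ B).IsHermitian := by
  rw [IsHermitian, conjTranspose_kronecker, hA.eq, hB.eq]

variable [Fintype n]

theorem trace_re_le_trace_re {A B : Matrix n n ℂ} (h : A ≤ B) : A.trace.re ≤ B.trace.re := by
  have := (Complex.nonneg_iff.mp (Matrix.le_iff.mp h).trace_nonneg).1
  rw [trace_sub, Complex.sub_re] at this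
  linarith

theorem trace_re_pos_of_ne_zero {A : Matrix n n ℂ} (hA : A.PosSemidef) (hA0 : A ≠ 0) :
    0 < A.trace.re := by
  obtain ⟨hre, him⟩ := Complex.nonneg_iff.mp hA.trace_nonneg
  exact lt_of_le_of_ne hre fun h => hA0 (hA.trace_eq_zero_iff.mp (Complex.ext h.symm him.symm))

theorem le_one_of_trace_le_one [DecidableEq n] {M : Matrix n n ℂ} (hM : 0 ≤ M)
    (htr : M.trace.re ≤ 1) : M ≤ 1 := by
  have hM' := hM.posSemidef
  refine (CFC.le_one_iff (R := ℝ) M hM'.1.isSelfAdjoint).mpr ?_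
  rintro _ hx
  obtain ⟨i, rfl⟩ := hM'.1.spectrum_real_eq_range_eigenvalues ▸ hx
  calc hM'.1.eigenvalues i ≤ ∑ j, hM'.1.eigenvalues j :=
        Finset.single_le_sum (fun j _ => hM'.eigenvalues_nonneg j) (Finset.mem_univ i)
    _ = M.trace.re := by simp [hM'.1.trace_eq_sum_eigenvalues]
    _ ≤ 1 := htr

theorem mul_eq_zero_of_trace_mul_eq_zero [DecidableEq n] {A B : Matrix n n ℂ} (hA : 0 ≤ A)
    (hB : 0 ≤ B) (h : (A * B).trace = 0) : A * B = 0 := by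
  set S := CFC.sqrt A
  set T := CFC.sqrt B
  have hS : Sᴴ = S := (CFC.sqrt_nonneg A).posSemidef.1
  have hT : Tᴴ = T := (CFC.sqrt_nonneg B).posSemidef.1
  have hSS : S * S = A := CFC.sqrt_mul_sqrt_self A
  have hTT : T * T = B := CFC.sqrt_mul_sqrt_self B
  -- `tr ((S T)ᴴ (S T)) = tr (A B)`
  have hST : S * T = 0 := by
    rw [← trace_conjTranspose_mul_self_eq_zero_iff, conjTranspose_mul, hS, hT, ← h, ← hSS, ← hTT,
      show T * S * (S * T) = T * (S * S * T) by noncomm_ring, trace_mul_comm]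
    noncomm_ring
  rw [← hSS, ← hTT, show S * S * (T * T) = S * (S * T) * T by noncomm_ring, hST, mul_zero,
    zero_mul]

theorem kronecker_le_kronecker_left {m : Type*} [Finite m] {A B : Matrix n n ℂ}
    {σ : Matrix m m ℂ} (h : A ≤ B) (hσ : 0 ≤ σ) : A ⊗ₖ σ ≤ B ⊗ₖ σ := by
  have : B ⊗ₖ σ - A ⊗ₖ σ = (B - A) ⊗ₖ σ := by
    ext
    simp [kroneckerMap_apply, sub_mul]
  rw [Matrix.le_iff, this]
  exact (Matrix.le_iff.mp h).kronecker hσ.posSemidef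

end Order

section SupportProjection

variable {n : Type*} [Fintype n] [DecidableEq n] {M : Matrix n n ℂ}

theorem fcal_eq_cfc (hM : M.IsHermitian) (f : ℝ → ℝ) : fcal f M = cfc f M := by
  rw [fcal, dif_pos hM, hM.cfc_eq, IsHermitian.cfc, Unitary.conjStarAlgAut_apply]
  rfl

theorem suppProj_eq_cfc (hM : M.IsHermitian) :
    suppProj M = cfc (fun x : ℝ => if x = 0 then 0 else 1) M :=
  fcal_eq_cfc hM _

theorem suppProj_zero : suppProj (0 : Matrix n n ℂ) = 0 := by
  rw [suppProj_eq_cfc isHermitian_zero, cfc_apply_zero]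
  simp

theorem suppProj_isHermitian (hM : M.IsHermitian) : (suppProj M).IsHermitian := by
  rw [suppProj_eq_cfc hM]
  exact cfc_predicate _ _

theorem mul_suppProj (hM : M.IsHermitian) : M * suppProj M = M := by
  have hfin := M.finite_real_spectrum
  calc M * suppProj M
      = cfc (fun x : ℝ => x) M * cfc (fun x : ℝ => if x = 0 then 0 else 1) M := by
        rw [cfc_id' ℝ M hM.isSelfAdjoint, suppProj_eq_cfc hM]
    _ = cfc (fun x : ℝ => x * if x = 0 then 0 else 1) M :=
        (cfc_mul _ _ _ (hfin.continuousOn _) (hfin.continuousOn _)).symm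
    _ = cfc (fun x : ℝ => x) M := cfc_congr fun x _ => by split_ifs <;> simp_all
    _ = M := cfc_id' ℝ M hM.isSelfAdjoint

theorem suppProj_mul_suppProj (hM : M.IsHermitian) :
    suppProj M * suppProj M = suppProj M := by
  have hfin := M.finite_real_spectrum
  rw [suppProj_eq_cfc hM, ← cfc_mul _ _ _ (hfin.continuousOn _) (hfin.continuousOn _)]
  exact cfc_congr fun x _ => by split_ifs <;> simp

theorem suppProj_le_one (hM : M.IsHermitian) : suppProj M ≤ 1 := by
  rw [suppProj_eq_cfc hM]
  refine (cfc_le_one_iff _ _ (M.finite_real_spectrum.continuousOn _) hM.isSelfAdjoint).mpr ?_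
  intro x _
  split_ifs <;> norm_num

theorem smul_suppProj_le_iff (hM : M.IsHermitian) {c : ℝ} :
    c • suppProj M ≤ M ↔ ∀ x ∈ spectrum ℝ M, x ≠ 0 → c ≤ x := by
  have hfin := M.finite_real_spectrum
  rw [suppProj_eq_cfc hM, ← cfc_smul c _ _ (hfin.continuousOn _)]
  conv_lhs => rhs; rw [← cfc_id' ℝ M hM.isSelfAdjoint]
  refine (cfc_le_iff _ _ _ (hfin.continuousOn _) (hfin.continuousOn _) hM.isSelfAdjoint).trans ?_
  refine forall₂_congr fun x _ => ?_
  by_cases hx : x = 0 <;> simp [hx]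

theorem exists_rpow_smul_suppProj_le (hM : 0 ≤ M) :
    ∃ l : ℝ, (2 : ℝ) ^ l • suppProj M ≤ M := by
  have hsmall : ∀ᶠ l : ℝ in Filter.atBot, ∀ x ∈ spectrum ℝ M, x ≠ 0 → (2 : ℝ) ^ l ≤ x := by
    refine (Filter.eventually_all_finite M.finite_real_spectrum).mpr fun x hx => ?_
    by_cases hx0 : x = 0
    · exact Filter.Eventually.of_forall fun _ h => absurd hx0 h
    have hxpos : 0 < x := lt_of_le_of_ne (spectrum_nonneg_of_nonneg hM hx) (Ne.symm hx0)
    filter_upwards [(tendsto_rpow_atBot_of_base_gt_one 2 one_lt_two).eventually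
      (eventually_lt_nhds hxpos)] with l hl _ using hl.le
  obtain ⟨l, hl⟩ := hsmall.exists
  exact ⟨l, (smul_suppProj_le_iff hM.posSemidef.1).mpr hl⟩

theorem le_one_of_smul_suppProj_le (hM : 0 ≤ M) (hM0 : M ≠ 0) (htr : M.trace.re ≤ 1) {c : ℝ}
    (hc : c • suppProj M ≤ M) : c ≤ 1 := by
  have hM' := hM.posSemidef.1.isSelfAdjoint
  obtain ⟨x, hx, hx0⟩ : ∃ x ∈ spectrum ℝ M, x ≠ 0 := by
    by_contra! h
    exact hM0 (CFC.eq_zero_of_spectrum_subset_zero (R := ℝ) M h hM')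
  calc c ≤ x := (smul_suppProj_le_iff hM'.isHermitian).mp hc x hx hx0
    _ ≤ 1 := (CFC.le_one_iff (R := ℝ) M hM').mp (le_one_of_trace_le_one hM htr) x hx

end SupportProjection

section MaxRelativeEntropy

variable {n : Type*} {ρ σ : Matrix n n ℂ}

theorem Dmax_eq_zero_of_forall_not_le (h : ∀ l : ℝ, ¬ ρ ≤ (2 : ℝ) ^ l • σ) : Dmax ρ σ = 0 := by
  rw [Dmax, show {l : ℝ | ((2 : ℝ) ^ l • σ - ρ).PosSemidef} = ∅ from
    Set.eq_empty_iff_forall_notMem.mpr h, Real.sInf_empty]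

variable [Fintype n]

theorem Dmax_zero_left (hσ : 0 ≤ σ) : Dmax 0 σ = 0 := by
  rw [Dmax, show {l : ℝ | ((2 : ℝ) ^ l • σ - 0).PosSemidef} = Set.univ from
    Set.eq_univ_of_forall fun l => smul_nonneg (by positivity) hσ, Real.sInf_univ]

theorem trace_re_le_rpow_mul_trace_re {l : ℝ} (h : ρ ≤ (2 : ℝ) ^ l • σ) :
    ρ.trace.re ≤ 2 ^ l * σ.trace.re := by
  simpa [trace_smul] using trace_re_le_trace_re h

theorem bddBelow_Dmax_set (hρ : 0 < ρ.trace.re) :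
    BddBelow {l : ℝ | ρ ≤ (2 : ℝ) ^ l • σ} := by
  refine ⟨Real.logb 2 (ρ.trace.re / σ.trace.re), fun l hl => ?_⟩
  have htr := trace_re_le_rpow_mul_trace_re hl
  have hσ : 0 < σ.trace.re := pos_of_mul_pos_right (hρ.trans_le htr) (by positivity)
  exact (Real.logb_le_iff_le_rpow one_lt_two (div_pos hρ hσ)).mpr ((div_le_iff₀ hσ).mpr htr)

theorem Dmax_le (hρ : 0 < ρ.trace.re) {l : ℝ} (h : ρ ≤ (2 : ℝ) ^ l • σ) : Dmax ρ σ ≤ l :=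
  csInf_le (bddBelow_Dmax_set hρ) h

theorem Dmax_nonneg (hρ : 0 < ρ.trace.re) (hσ : σ.trace.re ≤ ρ.trace.re) : 0 ≤ Dmax ρ σ := by
  by_cases hne : ∃ l : ℝ, ρ ≤ (2 : ℝ) ^ l • σ
  · refine le_csInf hne fun l hl => ?_
    have htr := trace_re_le_rpow_mul_trace_re hl
    have h1 : (2 : ℝ) ^ (0 : ℝ) ≤ 2 ^ l := by
      rw [Real.rpow_zero]
      nlinarith [Real.rpow_pos_of_pos two_pos l]
    exact (Real.rpow_le_rpow_left_iff one_lt_two).mp h1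
  · push Not at hne
    rw [Dmax_eq_zero_of_forall_not_le hne]

end MaxRelativeEntropy

theorem exists_isDensity {n : Type*} [Fintype n] [DecidableEq n] [Nonempty n] :
    ∃ σ : Matrix n n ℂ, IsDensity σ := by
  refine ⟨(Fintype.card n : ℝ)⁻¹ • 1, PosSemidef.one.smul (by positivity), ?_⟩
  rw [trace_smul, trace_one, Complex.real_smul]
  push_cast
  field_simp

theorem sInf_eq_zero_of_forall_eq_zero {s : Set ℝ} (h : ∀ x ∈ s, x = 0) : sInf s = 0 :=
  le_antisymm (Real.sInf_nonpos fun x hx => (h x hx).le) (Real.sInf_nonneg fun x hx => (h x hx).ge)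

section PartialTrace

variable {a b : Type*} [Fintype b]

theorem ptrB_eq_sum_submatrix (ρ : Matrix (a × b) (a × b) ℂ) :
    ptrB ρ = ∑ k : b, ρ.submatrix (·, k) (·, k) := by
  ext i j
  simp [ptrB, Matrix.sum_apply]

theorem posSemidef_ptrB {ρ : Matrix (a × b) (a × b) ℂ} (hρ : ρ.PosSemidef) :
    (ptrB ρ).PosSemidef := by
  rw [ptrB_eq_sum_submatrix]
  exact posSemidef_sum _ fun k _ => hρ.submatrix _

theorem ptrB_zero : ptrB (0 : Matrix (a × b) (a × b) ℂ) = 0 := by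
  ext
  simp [ptrB]

variable [Fintype a]

theorem trace_ptrB (ρ : Matrix (a × b) (a × b) ℂ) : (ptrB ρ).trace = ρ.trace := by
  simp [Matrix.trace, ptrB, Fintype.sum_prod_type]

theorem trace_ptrB_kronecker {ρ : Matrix (a × b) (a × b) ℂ} {σ : Matrix b b ℂ}
    (hσ : IsDensity σ) : (ptrB ρ ⊗ₖ σ).trace = ρ.trace := by
  rw [trace_kronecker, trace_ptrB, hσ.2, mul_one]

theorem trace_mul_kronecker_one [DecidableEq b] (ρ : Matrix (a × b) (a × b) ℂ)
    (M : Matrix a a ℂ) : (ρ * (M ⊗ₖ (1 : Matrix b b ℂ))).trace = (ptrB ρ * M).trace := by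
  simp only [Matrix.trace, Matrix.diag_apply, Matrix.mul_apply, ptrB, Matrix.of_apply,
    Matrix.kroneckerMap_apply, Matrix.one_apply, Fintype.sum_prod_type, mul_ite, mul_one,
    mul_zero, Finset.sum_ite_eq', Finset.mem_univ, if_true, Finset.sum_mul]
  exact Finset.sum_congr rfl fun i _ => Finset.sum_comm

end PartialTrace

section MaxInformation

variable {a b : Type*} [Fintype a] [Fintype b] {ρ : Matrix (a × b) (a × b) ℂ} {σ : Matrix b b ℂ}

theorem Imax_le_Dmax (hρ : 0 < ρ.trace.re) (hσ : IsDensity σ) :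
    Imax ρ ≤ Dmax ρ (ptrB ρ ⊗ₖ σ) := by
  refine csInf_le ⟨0, ?_⟩ ⟨σ, hσ, rfl⟩
  rintro _ ⟨τ, hτ, rfl⟩
  exact Dmax_nonneg hρ (by rw [trace_ptrB_kronecker hτ])

theorem Imax_zero : Imax (0 : Matrix (a × b) (a × b) ℂ) = 0 := by
  refine sInf_eq_zero_of_forall_eq_zero ?_
  rintro _ ⟨σ, -, rfl⟩
  rw [ptrB_zero, zero_kronecker, Dmax_zero_left le_rfl]

theorem HminCond_zero [DecidableEq a] : HminCond (0 : Matrix (a × b) (a × b) ℂ) = 0 := by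
  rw [HminCond, sInf_eq_zero_of_forall_eq_zero, neg_zero]
  rintro _ ⟨σ, hσ, rfl⟩
  exact Dmax_zero_left (PosSemidef.one.kronecker hσ.1).nonneg

variable [DecidableEq a] [DecidableEq b]

theorem mul_suppProj_ptrB_kronecker_one (hρ : ρ.PosSemidef) :
    ρ * (suppProj (ptrB ρ) ⊗ₖ (1 : Matrix b b ℂ)) = ρ := by
  set P := suppProj (ptrB ρ)
  have hA := (posSemidef_ptrB hρ).1
  have hsum : (1 - P) ⊗ₖ (1 : Matrix b b ℂ) + P ⊗ₖ 1 = 1 := by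
    rw [← add_kronecker, sub_add_cancel, one_kronecker_one]
  have hR : ρ * ((1 - P) ⊗ₖ (1 : Matrix b b ℂ)) = 0 := by
    refine mul_eq_zero_of_trace_mul_eq_zero hρ.nonneg
      (Matrix.PosSemidef.kronecker (suppProj_le_one hA) PosSemidef.one).nonneg ?_
    rw [trace_mul_kronecker_one, Matrix.mul_sub, mul_one, mul_suppProj hA, sub_self, trace_zero]
  rw [eq_sub_of_add_eq' hsum, Matrix.mul_sub, mul_one, hR, sub_zero]

theorem suppProj_ptrB_kronecker_one_mul_mul (hρ : ρ.PosSemidef) :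
    (suppProj (ptrB ρ) ⊗ₖ (1 : Matrix b b ℂ)) * ρ * (suppProj (ptrB ρ) ⊗ₖ 1) = ρ := by
  have hQ : (suppProj (ptrB ρ) ⊗ₖ (1 : Matrix b b ℂ))ᴴ = suppProj (ptrB ρ) ⊗ₖ 1 :=
    isHermitian_kronecker (suppProj_isHermitian (posSemidef_ptrB hρ).1) isHermitian_one
  have hleft : (suppProj (ptrB ρ) ⊗ₖ (1 : Matrix b b ℂ)) * ρ = ρ := by
    simpa [conjTranspose_mul, hQ, hρ.1.eq] using
      congrArg conjTranspose (mul_suppProj_ptrB_kronecker_one hρ)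
  rw [hleft, mul_suppProj_ptrB_kronecker_one hρ]

theorem le_smul_ptrB_kronecker (hρ : ρ.PosSemidef) (hσ : σ.PosSemidef) {c d : ℝ} (hc : 0 < c)
    (hd : 0 ≤ d) (hcP : c • suppProj (ptrB ρ) ≤ ptrB ρ)
    (hdρ : ρ ≤ d • ((1 : Matrix a a ℂ) ⊗ₖ σ)) : ρ ≤ (d / c) • (ptrB ρ ⊗ₖ σ) := by
  set P := suppProj (ptrB ρ)
  have hP := suppProj_isHermitian (posSemidef_ptrB hρ).1
  calc ρ = (P ⊗ₖ (1 : Matrix b b ℂ)) * ρ * (P ⊗ₖ 1) :=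
        (suppProj_ptrB_kronecker_one_mul_mul hρ).symm
    _ ≤ (P ⊗ₖ (1 : Matrix b b ℂ)) * (d • ((1 : Matrix a a ℂ) ⊗ₖ σ)) * (P ⊗ₖ 1) :=
        IsSelfAdjoint.conjugate_le_conjugate hdρ
          (isHermitian_kronecker hP isHermitian_one).isSelfAdjoint
    _ = (d / c) • ((c • P) ⊗ₖ σ) := by
        rw [mul_smul_comm, smul_mul_assoc, ← mul_kronecker_mul, ← mul_kronecker_mul, mul_one,
          one_mul, mul_one, suppProj_mul_suppProj (posSemidef_ptrB hρ).1, smul_kronecker,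
          smul_smul, div_mul_cancel₀ _ hc.ne']
    _ ≤ (d / c) • (ptrB ρ ⊗ₖ σ) :=
        smul_le_smul_of_nonneg_left (kronecker_le_kronecker_left hcP hσ.nonneg) (by positivity)

theorem Imax_add_le_Dmax (hρ : Subnormalized ρ) (hρ0 : ρ ≠ 0) (hσ : IsDensity σ) {l : ℝ}
    (hl : (2 : ℝ) ^ l • suppProj (ptrB ρ) ≤ ptrB ρ) :
    Imax ρ + l ≤ Dmax ρ ((1 : Matrix a a ℂ) ⊗ₖ σ) := by
  have hA := posSemidef_ptrB hρ.1
  have htr : 0 < ρ.trace.re := trace_re_pos_of_ne_zero hρ.1 hρ0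
  by_cases hne : ∃ t : ℝ, ρ ≤ (2 : ℝ) ^ t • ((1 : Matrix a a ℂ) ⊗ₖ σ)
  · refine le_csInf hne fun t ht => ?_
    have hle := le_smul_ptrB_kronecker hρ.1 hσ.1 (by positivity) (by positivity) hl ht
    rw [← Real.rpow_sub two_pos] at hle
    linarith [Imax_le_Dmax htr hσ, Dmax_le htr hle]
  -- Both `Dmax` take the junk value `0` here: `ρ_A ≤ 1` makes `ρ_A ⊗ σ` no easier to dominate.
  push Not at hne
  have hAσ : ptrB ρ ⊗ₖ σ ≤ (1 : Matrix a a ℂ) ⊗ₖ σ :=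
    kronecker_le_kronecker_left
      (le_one_of_trace_le_one hA.nonneg (by rw [trace_ptrB]; exact hρ.2)) hσ.1.nonneg
  have hne' : ∀ t : ℝ, ¬ ρ ≤ (2 : ℝ) ^ t • (ptrB ρ ⊗ₖ σ) := fun t ht =>
    hne t (ht.trans (smul_le_smul_of_nonneg_left hAσ (by positivity)))
  have hA0 : ptrB ρ ≠ 0 := fun h => htr.ne' (by rw [← trace_ptrB, h, trace_zero, Complex.zero_re])
  have hl0 : (2 : ℝ) ^ l ≤ 2 ^ (0 : ℝ) := Real.rpow_zero (2 : ℝ) ▸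
    le_one_of_smul_suppProj_le hA.nonneg hA0 (by rw [trace_ptrB]; exact hρ.2) hl
  have hI := Imax_le_Dmax htr hσ
  rw [Dmax_eq_zero_of_forall_not_le hne'] at hI
  rw [Dmax_eq_zero_of_forall_not_le hne]
  linarith [(Real.rpow_le_rpow_left_iff one_lt_two).mp hl0]

end MaxInformation

end QIT

/-- Entropy-gap upper bound for the max-information. -/
theorem Imax_le_HR_sub_Hmin {a b : Type*} [Fintype a] [DecidableEq a]
    [Fintype b] [DecidableEq b]
    (ρ : Matrix (a × b) (a × b) ℂ) (hρ : Subnormalized ρ) :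
    Imax ρ ≤
      -(sSup {l : ℝ | (ptrB ρ - (2 : ℝ) ^ l • suppProj (ptrB ρ)).PosSemidef})
        - HminCond ρ := by
  by_cases hρ0 : ρ = 0
  -- the admissible set of `l` is then all of `ℝ`, and every term is the junk value `0`
  · subst hρ0
    have hL : {l : ℝ | (ptrB (0 : Matrix (a × b) (a × b) ℂ)
        - (2 : ℝ) ^ l • suppProj (ptrB (0 : Matrix (a × b) (a × b) ℂ))).PosSemidef} = Set.univ :=
      Set.eq_univ_of_forall fun l => by simp [ptrB_zero, suppProj_zero, PosSemidef.zero]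
    rw [hL, Real.sSup_univ, Imax_zero, HminCond_zero]
    norm_num
  have : Nonempty b := by
    by_contra! hb
    exact hρ0 (Matrix.ext fun i => isEmptyElim i.2)
  obtain ⟨σ₀, hσ₀⟩ := exists_isDensity (n := b)
  set L := {l : ℝ | (ptrB ρ - (2 : ℝ) ^ l • suppProj (ptrB ρ)).PosSemidef}
  have hL : L.Nonempty := exists_rpow_smul_suppProj_le (posSemidef_ptrB hρ.1).nonneg
  suffices Imax ρ + sSup L ≤ -HminCond ρ by linarith
  rw [HminCond, neg_neg]
  refine le_csInf ⟨_, σ₀, hσ₀, rfl⟩ ?_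
  rintro _ ⟨σ, hσ, rfl⟩
  have : sSup L ≤ Dmax ρ ((1 : Matrix a a ℂ) ⊗ₖ σ) - Imax ρ :=
    csSup_le hL fun l hl => le_sub_iff_add_le'.mpr (Imax_add_le_Dmax hρ hρ0 hσ hl)
  linarith
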